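/- arXiv:2506.22258 — 4 statements merged into one kernel-verified Lean document; each statement's English description precedes it below -/
import Mathlib

section
/- Let q ≥ 1 and let π be a probability measure on ℝ^d satisfying the L^q-Poincaré inequality PI(q) with constant C_P(q) > 0. Then π satisfies a three-set isoperimetric inequality with functions Υ(t) = C_P(q)·t^q / (2^{2q}·(1 + 2^q·C_P(q)·t^q)) and Ψ(t) = t; that is, for every measurable partition ℝ^d = S₁ ⊔ S₂ ⊔ S₃ with D(S₁,S₂) > 0, π(S₃) ≥ (D(S₁,S₂)^q / (2^{2q}·(C_P(q)^{-1} + 2^q·D(S₁,S₂)^q))) · min{π(S₁), π(S₂)}. -/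
open MeasureTheory ProbabilityTheory Set
open scoped ENNReal NNReal

noncomputable section

abbrev Euc (d : ℕ) := EuclideanSpace ℝ (Fin d)

/-- Total variation distance between two measures. -/
def tvDist {X : Type*} [MeasurableSpace X] (μ ν : Measure X) : ℝ :=
  ⨆ s : {s : Set X // MeasurableSet s}, |(μ s.1).toReal - (ν s.1).toReal|

/-- Euclidean distance between two sets. -/
def setDist' {X : Type*} [Dist X] (A B : Set X) : ℝ :=
  sInf {r | ∃ x ∈ A, ∃ y ∈ B, r = dist x y}

/-- Update the `k`-th coordinate of `x` to `t`. -/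
def updCoord {d : ℕ} (k : Fin d) (t : ℝ) (x : Euc d) : Euc d :=
  WithLp.toLp 2 (Function.update x k t)

/-- Euclidean distance between `x` and `y` after removing coordinate `k`. -/
def distMinus {d : ℕ} (k : Fin d) (x y : Euc d) : ℝ :=
  Real.sqrt (∑ j ∈ Finset.univ.erase k, (x j - y j) ^ 2)

/-- The Gibbs kernel updating coordinate `k` from conditionals `cond`. -/
def gibbsStep {d : ℕ} (cond : Fin d → Euc d → Measure ℝ) (k : Fin d) (x : Euc d) :
    Measure (Euc d) :=
  (cond k x).map (fun t => updCoord k t x)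

/-- Sequentially update coordinates `0, 1, …, n-1`. -/
def sweep {d : ℕ} (cond : Fin d → Euc d → Measure ℝ) : ℕ → Euc d → Measure (Euc d)
  | 0, x => Measure.dirac x
  | (n + 1), x => (sweep cond n x).bind
      (fun u => if h : n < d then gibbsStep cond ⟨n, h⟩ u else Measure.dirac u)

/-- The systematic-scan Gibbs kernel. -/
def PSS {d : ℕ} (cond : Fin d → Euc d → Measure ℝ) (x : Euc d) : Measure (Euc d) :=
  sweep cond d x

/-- The random-scan Gibbs kernel. -/
def PRS {d : ℕ} (cond : Fin d → Euc d → Measure ℝ) (x : Euc d) : Measure (Euc d) :=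
  (d : ℝ≥0∞)⁻¹ • ∑ k : Fin d, gibbsStep cond k x

/-- `N`-fold iterate of a Markov kernel. -/
def iterK {X : Type*} [MeasurableSpace X] (P : X → Measure X) : ℕ → X → Measure X
  | 0, x => Measure.dirac x
  | (n + 1), x => (iterK P n x).bind P

/-- Distribution after `k` steps of `P` started from `μ`. -/
def iterM {X : Type*} [MeasurableSpace X] (P : X → Measure X) (k : ℕ) (μ : Measure X) :
    Measure X :=
  μ.bind (iterK P k)

/-- Conductance of a `π`-invariant Markov kernel `P`. -/
def conductance {X : Type*} [MeasurableSpace X] (π : Measure X) (P : X → Measure X) : ℝ :=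
  sInf {r | ∃ S : Set X, MeasurableSet S ∧ 0 < π S ∧ π S ≤ 1 / 2 ∧
    r = (∫ x in S, (P x Sᶜ).toReal ∂π) / (π S).toReal}

/-- Spectral gap of a `π`-reversible Markov kernel `P`. -/
def spectralGap {X : Type*} [MeasurableSpace X] (π : Measure X) (P : X → Measure X) : ℝ :=
  sInf {r | ∃ f : X → ℝ, MemLp f 2 π ∧ (∫ x, f x ∂π) = 0 ∧ (∫ x, f x ^ 2 ∂π) ≠ 0 ∧
    r = (∫ x, f x * (f x - ∫ y, f y ∂(P x)) ∂π) / ∫ x, f x ^ 2 ∂π}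

/-- ζ-mixing time of `P` started from `μ`, targeting `π`. -/
def mixingTime {X : Type*} [MeasurableSpace X] (π μ : Measure X) (P : X → Measure X)
    (ζ : ℝ) : ℕ∞ :=
  ⨅ (k : ℕ) (_ : tvDist (iterM P k μ) π ≤ ζ), (k : ℕ∞)

/-- `π` satisfies the `L^q`-Poincaré inequality with constant `C`. -/
def PoincareIneq {d : ℕ} (π : Measure (Euc d)) (q C : ℝ) : Prop :=
  ∀ f : Euc d → ℝ, LocallyLipschitz f →
    ∫ x, |f x - ∫ y, f y ∂π| ^ q ∂π ≤ C⁻¹ * ∫ x, ‖fderiv ℝ f x‖ ^ q ∂π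

/-- `π` satisfies the `L^q`-log-Sobolev inequality with constant `C`. -/
def LogSobolevIneq {d : ℕ} (π : Measure (Euc d)) (q C : ℝ) : Prop :=
  ∀ f : Euc d → ℝ, LocallyLipschitz f →
    (∫ x, |f x| ^ q * Real.log (|f x| ^ q) ∂π)
      - (∫ x, |f x| ^ q ∂π) * Real.log (∫ x, |f x| ^ q ∂π)
    ≤ C⁻¹ * ∫ x, ‖fderiv ℝ f x‖ ^ q ∂π

/-- The conditional distributions of `π` (given by `cond`) are `(M, β)`-TV continuous. -/
def TVContinuousConditionals {d : ℕ} (cond : Fin d → Euc d → Measure ℝ) (M β : ℝ) : Prop :=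
  ∀ k : Fin d, ∀ x y : Euc d, tvDist (cond k x) (cond k y) ≤ M * distMinus k x y ^ β

/-- `cond` is a valid family of single-coordinate conditional distributions for `π`:
each `cond k x` is a probability measure, depends only on `x₋ₖ`, is measurable in `x`,
and disintegrates `π`. -/
def IsConditional {d : ℕ} (π : Measure (Euc d)) (cond : Fin d → Euc d → Measure ℝ) : Prop :=
  (∀ k x, IsProbabilityMeasure (cond k x)) ∧
  (∀ k, Measurable (cond k)) ∧
  (∀ k : Fin d, ∀ x y : Euc d, (∀ j, j ≠ k → x j = y j) → cond k x = cond k y) ∧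
  (∀ k : Fin d, π.bind (gibbsStep cond k) = π)

/-- Normalized Gibbs measure with potential `U`. -/
def gibbsTarget {d : ℕ} (U : Euc d → ℝ) : Measure (Euc d) :=
  (∫⁻ x, ENNReal.ofReal (Real.exp (-U x)))⁻¹ •
    (volume.withDensity fun x => ENNReal.ofReal (Real.exp (-U x)))

/-- Explicit one-dimensional conditional distribution of the Gibbs measure with
potential `U`: the `k`-th coordinate given the others (taken from `x`). -/
def gibbsCond {d : ℕ} (U : Euc d → ℝ) (k : Fin d) (x : Euc d) : Measure ℝ :=
  (∫⁻ t, ENNReal.ofReal (Real.exp (-U (updCoord k t x))))⁻¹ •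
    (volume.withDensity fun t => ENNReal.ofReal (Real.exp (-U (updCoord k t x))))

/-! Test the Poincaré inequality on the ramp `f = min (infDist · S₁ / D) 1` with `D = D(S₁,S₂)`:
it is `D⁻¹`-Lipschitz, `0` on `S₁` and `1` on `S₂`. Being extremal on `S₁ ∪ S₂`, it has zero
gradient there, so the right-hand side is at most `C⁻¹ D^{-q} π(S₃)`. For `m = E_π f`, one of
`m` and `1 - m` is at least `1/2`, so the left-hand side is at least `2^{-q} min (π S₁) (π S₂)`.
This yields `π(S₃) ≥ C D^q 2^{-q} min (π S₁) (π S₂)`, which is stronger than the claim. -/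

open Metric

lemma setDist'_le_infDist {X : Type*} [PseudoMetricSpace X] {A B : Set X} {x : X}
    (hx : x ∈ B) : setDist' A B ≤ infDist x A := by
  rcases A.eq_empty_or_nonempty with rfl | hA
  · simp [setDist']
  refine (le_infDist hA).2 fun y hy => ?_
  refine csInf_le ⟨0, ?_⟩ ⟨y, hy, x, hx, dist_comm x y⟩
  rintro r ⟨a, -, b, -, rfl⟩
  exact dist_nonneg

lemma inv_two_rpow_le_abs_rpow_add_abs_one_sub_rpow {q : ℝ} (hq : 0 ≤ q) (c : ℝ) :
    (2 ^ q)⁻¹ ≤ |c| ^ q + |1 - c| ^ q := by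
  have half_le : (2 : ℝ)⁻¹ ≤ max |c| |1 - c| := by
    rcases le_total c 2⁻¹ with h | h
    · exact le_max_of_le_right (by rw [abs_of_nonneg (by linarith)]; linarith)
    · exact le_max_of_le_left (by rw [abs_of_nonneg (by linarith)]; linarith)
  calc (2 ^ q)⁻¹ = (2⁻¹ : ℝ) ^ q := (Real.inv_rpow zero_le_two q).symm
    _ ≤ max |c| |1 - c| ^ q := by gcongr
    _ ≤ |c| ^ q + |1 - c| ^ q := by
      rcases max_choice |c| |1 - c| with h | h <;> rw [h] <;> simp [Real.rpow_nonneg, abs_nonneg]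

def distRamp {X : Type*} [PseudoMetricSpace X] (A : Set X) (D : ℝ) (x : X) : ℝ :=
  min (infDist x A / D) 1

section distRamp

variable {X : Type*} [PseudoMetricSpace X] {A : Set X} {D : ℝ} {x : X}

lemma distRamp_nonneg (hD : 0 ≤ D) : 0 ≤ distRamp A D x :=
  le_min (div_nonneg infDist_nonneg hD) zero_le_one

lemma distRamp_le_one : distRamp A D x ≤ 1 := min_le_right _ _

lemma distRamp_of_mem (hx : x ∈ A) : distRamp A D x = 0 := by
  simp [distRamp, infDist_zero_of_mem hx]

lemma distRamp_of_le_infDist (hD : 0 < D) (hx : D ≤ infDist x A) : distRamp A D x = 1 :=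
  min_eq_right ((one_le_div hD).2 hx)

lemma lipschitzWith_distRamp (A : Set X) (D : ℝ) : LipschitzWith ‖D⁻¹‖₊ (distRamp A D) := by
  have h := ((lipschitzWith_smul D⁻¹).comp (lipschitz_infDist_pt A)).min_const 1
  simp only [mul_one, Function.comp_def, smul_eq_mul, ← div_eq_inv_mul] at h
  exact h

end distRamp

section fderiv

variable {E : Type*} [NormedAddCommGroup E] [NormedSpace ℝ E] {A : Set E} {D : ℝ} {x : E}

lemma norm_fderiv_distRamp_le (hD : 0 ≤ D) : ‖fderiv ℝ (distRamp A D) x‖ ≤ D⁻¹ := by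
  simpa [abs_of_nonneg hD] using norm_fderiv_le_of_lipschitz ℝ (lipschitzWith_distRamp A D)

lemma fderiv_distRamp_of_mem (hD : 0 ≤ D) (hx : x ∈ A) : fderiv ℝ (distRamp A D) x = 0 :=
  IsLocalMin.fderiv_eq_zero <| .of_forall fun _ => (distRamp_of_mem hx).symm ▸ distRamp_nonneg hD

lemma fderiv_distRamp_of_le_infDist (hD : 0 < D) (hx : D ≤ infDist x A) :
    fderiv ℝ (distRamp A D) x = 0 :=
  IsLocalMax.fderiv_eq_zero <| .of_forall fun _ =>
    (distRamp_of_le_infDist hD hx).symm ▸ distRamp_le_one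

end fderiv

section integral

variable {α : Type*} [MeasurableSpace α] {μ : Measure α}

lemma inv_two_rpow_mul_min_le_integral_abs_sub_rpow {f : α → ℝ} {A B : Set α} {c q : ℝ}
    (hq : 0 ≤ q) (hA : MeasurableSet A) (hB : MeasurableSet B) (hAB : Disjoint A B)
    (hfA : EqOn f 0 A) (hfB : EqOn f 1 B) (hint : Integrable (fun x => |f x - c| ^ q) μ) :
    (2 ^ q)⁻¹ * min (μ.real A) (μ.real B) ≤ ∫ x, |f x - c| ^ q ∂μ := by
  have integral_A : ∫ x in A, |f x - c| ^ q ∂μ = μ.real A * |c| ^ q := by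
    rw [setIntegral_congr_fun hA (g := fun _ => |c| ^ q) fun x hx => by simp [hfA hx],
      setIntegral_const, smul_eq_mul]
  have integral_B : ∫ x in B, |f x - c| ^ q ∂μ = μ.real B * |1 - c| ^ q := by
    rw [setIntegral_congr_fun hB (g := fun _ => |1 - c| ^ q) fun x hx => by simp [hfB hx],
      setIntegral_const, smul_eq_mul]
  calc (2 ^ q)⁻¹ * min (μ.real A) (μ.real B)
      ≤ (|c| ^ q + |1 - c| ^ q) * min (μ.real A) (μ.real B) := by
        gcongr; exact inv_two_rpow_le_abs_rpow_add_abs_one_sub_rpow hq c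
    _ ≤ |c| ^ q * μ.real A + |1 - c| ^ q * μ.real B := by
        rw [add_mul]
        gcongr
        exacts [min_le_left _ _, min_le_right _ _]
    _ = ∫ x in A ∪ B, |f x - c| ^ q ∂μ := by
        rw [setIntegral_union hAB hB hint.integrableOn hint.integrableOn, integral_A, integral_B]
        ring
    _ ≤ ∫ x, |f x - c| ^ q ∂μ :=
        setIntegral_le_integral hint (.of_forall fun _ => by positivity)

lemma integral_rpow_le_measureReal_mul [IsFiniteMeasure μ] {g : α → ℝ} {S : Set α} {L q : ℝ}
    (hq : 0 < q) (hS : MeasurableSet S) (hg0 : ∀ x, 0 ≤ g x) (hgL : ∀ x, g x ≤ L)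
    (hgS : ∀ x ∉ S, g x = 0) :
    ∫ x, g x ^ q ∂μ ≤ μ.real S * L ^ q := by
  have hle : ∀ x, g x ^ q ≤ S.indicator (fun _ => L ^ q) x := by
    intro x
    by_cases hx : x ∈ S
    · simpa [hx] using Real.rpow_le_rpow (hg0 x) (hgL x) hq.le
    · simp [hx, hgS x hx, Real.zero_rpow hq.ne']
  calc ∫ x, g x ^ q ∂μ ≤ ∫ x, S.indicator (fun _ => L ^ q) x ∂μ :=
        integral_mono_of_nonneg (.of_forall fun x => Real.rpow_nonneg (hg0 x) q)
          ((integrable_const _).indicator hS) (.of_forall hle)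
    _ = μ.real S * L ^ q := by rw [integral_indicator_const _ hS, smul_eq_mul]

end integral

theorem PoincareIneq.mul_rpow_div_mul_min_le {d : ℕ} {π : Measure (Euc d)} [IsFiniteMeasure π]
    {q C : ℝ} (hPI : PoincareIneq π q C) (hq : 0 < q) (hC : 0 < C) {S₁ S₂ S₃ : Set (Euc d)}
    (h₁ : MeasurableSet S₁) (h₂ : MeasurableSet S₂) (h₃ : MeasurableSet S₃)
    (h₁₂ : Disjoint S₁ S₂) (hcover : S₁ ∪ S₂ ∪ S₃ = univ) (hD : 0 < setDist' S₁ S₂) :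
    C * setDist' S₁ S₂ ^ q / 2 ^ q * min (π.real S₁) (π.real S₂) ≤ π.real S₃ := by
  set D := setDist' S₁ S₂
  set f := distRamp S₁ D
  set m := ∫ y, f y ∂π
  have hfS₂ : ∀ x ∈ S₂, D ≤ infDist x S₁ := fun x hx => setDist'_le_infDist hx
  have hint : Integrable (fun x => |f x - m| ^ q) π := by
    refine .of_bound (Continuous.aestronglyMeasurable ?_) ((1 + |m|) ^ q) (.of_forall fun x => ?_)
    · exact ((lipschitzWith_distRamp S₁ D).continuous.sub continuous_const).abs.rpow_const
        fun _ => Or.inr hq.le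
    · rw [Real.norm_of_nonneg (by positivity)]
      refine Real.rpow_le_rpow (abs_nonneg _) ((abs_sub _ _).trans ?_) hq.le
      rw [abs_of_nonneg (distRamp_nonneg hD.le)]
      gcongr
      exact distRamp_le_one
  have lower : (2 ^ q)⁻¹ * min (π.real S₁) (π.real S₂) ≤ ∫ x, |f x - m| ^ q ∂π :=
    inv_two_rpow_mul_min_le_integral_abs_sub_rpow hq.le h₁ h₂ h₁₂
      (fun x hx => distRamp_of_mem hx) (fun x hx => distRamp_of_le_infDist hD (hfS₂ x hx)) hint
  have upper : ∫ x, ‖fderiv ℝ f x‖ ^ q ∂π ≤ π.real S₃ * D⁻¹ ^ q := by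
    refine integral_rpow_le_measureReal_mul hq h₃ (fun _ => norm_nonneg _)
      (fun _ => norm_fderiv_distRamp_le hD.le) fun x hx => ?_
    have hx' : x ∈ S₁ ∪ S₂ := ((hcover ▸ mem_univ x : x ∈ S₁ ∪ S₂ ∪ S₃)).resolve_right hx
    rcases hx' with hx₁ | hx₂
    · simp [f, fderiv_distRamp_of_mem hD.le hx₁]
    · simp [f, fderiv_distRamp_of_le_infDist hD (hfS₂ x hx₂)]
  have hchain : (2 ^ q)⁻¹ * min (π.real S₁) (π.real S₂) ≤ C⁻¹ * (π.real S₃ * (D ^ q)⁻¹) := by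
    rw [← Real.inv_rpow hD.le]
    exact lower.trans ((hPI f (lipschitzWith_distRamp S₁ D).locallyLipschitz).trans (by gcongr))
  calc C * D ^ q / 2 ^ q * min (π.real S₁) (π.real S₂)
      = C * D ^ q * ((2 ^ q)⁻¹ * min (π.real S₁) (π.real S₂)) := by ring
    _ ≤ C * D ^ q * (C⁻¹ * (π.real S₃ * (D ^ q)⁻¹)) := by gcongr
    _ = π.real S₃ := by field_simp

lemma rpow_div_le_mul_rpow_div {q C D : ℝ} (hq : 0 ≤ q) (hC : 0 < C) (hD : 0 ≤ D) :
    D ^ q / (2 ^ (2 * q) * (C⁻¹ + 2 ^ q * D ^ q)) ≤ C * D ^ q / 2 ^ q := by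
  have h2q : (1 : ℝ) ≤ 2 ^ q := Real.one_le_rpow one_le_two hq
  have hden : 2 ^ q * C⁻¹ ≤ 2 ^ (2 * q) * (C⁻¹ + 2 ^ q * D ^ q) := by
    rw [two_mul, Real.rpow_add two_pos]
    calc (2 : ℝ) ^ q * C⁻¹ = 2 ^ q * 1 * C⁻¹ := by ring
      _ ≤ 2 ^ q * 2 ^ q * (C⁻¹ + 2 ^ q * D ^ q) := by
        gcongr
        exact le_add_of_nonneg_right (by positivity)
  calc D ^ q / (2 ^ (2 * q) * (C⁻¹ + 2 ^ q * D ^ q)) ≤ D ^ q / (2 ^ q * C⁻¹) := by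
        gcongr
    _ = C * D ^ q / 2 ^ q := by field_simp

theorem threeSet_iso_of_poincare_general {d : ℕ} (π : Measure (Euc d)) [IsProbabilityMeasure π]
    (q C : ℝ) (hq : 1 ≤ q) (hC : 0 < C) (hPI : PoincareIneq π q C)
    (S₁ S₂ S₃ : Set (Euc d))
    (h₁ : MeasurableSet S₁) (h₂ : MeasurableSet S₂) (h₃ : MeasurableSet S₃)
    (h₁₂ : Disjoint S₁ S₂)
    (hcover : S₁ ∪ S₂ ∪ S₃ = Set.univ)
    (hD : 0 < setDist' S₁ S₂) :
    setDist' S₁ S₂ ^ q / ((2 : ℝ) ^ (2 * q) * (C⁻¹ + (2 : ℝ) ^ q * setDist' S₁ S₂ ^ q))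
        * min (π S₁).toReal (π S₂).toReal
      ≤ (π S₃).toReal := by
  have hq₀ : 0 < q := zero_lt_one.trans_le hq
  calc _ ≤ C * setDist' S₁ S₂ ^ q / 2 ^ q * min (π.real S₁) (π.real S₂) :=
        mul_le_mul_of_nonneg_right (rpow_div_le_mul_rpow_div hq₀.le hC hD.le)
          (le_min measureReal_nonneg measureReal_nonneg)
    _ ≤ π.real S₃ := hPI.mul_rpow_div_mul_min_le hq₀ hC h₁ h₂ h₃ h₁₂ hcover hD

/-- **Three-set isoperimetric inequality from a Poincaré inequality.** If `π` satisfies the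
`L^q`-Poincaré inequality with constant `C_P(q) > 0`, then for every measurable partition
`ℝ^d = S₁ ⊔ S₂ ⊔ S₃` with `D(S₁,S₂) > 0`,
`π(S₃) ≥ D(S₁,S₂)^q / (2^{2q}·(C_P(q)⁻¹ + 2^q·D(S₁,S₂)^q)) · min {π(S₁), π(S₂)}`. -/
theorem threeSet_iso_of_poincare {d : ℕ} (π : Measure (Euc d)) [IsProbabilityMeasure π]
    (q C : ℝ) (hq : 1 ≤ q) (hC : 0 < C) (hPI : PoincareIneq π q C)
    (S₁ S₂ S₃ : Set (Euc d))
    (h₁ : MeasurableSet S₁) (h₂ : MeasurableSet S₂) (h₃ : MeasurableSet S₃)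
    (h₁₂ : Disjoint S₁ S₂) (h₁₃ : Disjoint S₁ S₃) (h₂₃ : Disjoint S₂ S₃)
    (hcover : S₁ ∪ S₂ ∪ S₃ = Set.univ)
    (hD : 0 < setDist' S₁ S₂) :
    setDist' S₁ S₂ ^ q / ((2 : ℝ) ^ (2 * q) * (C⁻¹ + (2 : ℝ) ^ q * setDist' S₁ S₂ ^ q))
        * min (π S₁).toReal (π S₂).toReal
      ≤ (π S₃).toReal :=
  threeSet_iso_of_poincare_general π q C hq hC hPI S₁ S₂ S₃ h₁ h₂ h₃ h₁₂ hcover hD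

end
end

section
/- Let q ≥ 1 and let π be a probability measure on ℝ^d satisfying the L^q-log-Sobolev inequality LSI(q) with constant C_LS(q) > 0. Then π satisfies a three-set isoperimetric inequality with functions Υ(t) = C_LS(q)·t^q / (1 + (1 + e^{-1})·C_LS(q)·t^q) and Ψ(t) = (t/2)·log(2/t); that is, for every measurable partition ℝ^d = S₁ ⊔ S₂ ⊔ S₃ with D(S₁,S₂) > 0, π(S₃) ≥ (D(S₁,S₂)^q / (C_LS(q)^{-1} + (1 + e^{-1})·D(S₁,S₂)^q)) · (min{π(S₁),π(S₂)}/2) · log(2/min{π(S₁),π(S₂)}). -/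
open MeasureTheory ProbabilityTheory Set
open scoped ENNReal NNReal

noncomputable section

/-!
Test the log-Sobolev inequality on `g = f ^ q`, where `f` is the `1/D`-Lipschitz thickened
indicator of `S₁` (equal to `1` on `S₁` and `0` on `S₂`, `D = D(S₁, S₂)`). As `f` attains its
maximum on `S₁` and its minimum on `S₂`, its derivative vanishes off `S₃`, so the energy is at
most `D⁻ᑫ π(S₃)`; the entropy density `g log g` vanishes off `S₃` and is `≥ -e⁻¹` on it; and the mean
`a` of `g` lies between `π(S₁)` and `π(S₁) + π(S₃)`, so that `-a log a ≥ -π(S₁) log π(S₁) - π(S₃)`.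
Together, `-m log m ≤ (C⁻¹ D⁻ᑫ + 1 + e⁻¹) π(S₃)` for `m = π(S₁)`, and symmetrically for `π(S₂)`;
finally `(m/2) log(2/m) ≤ -m log m` as `m ≤ 1/2`.
-/

namespace Real

lemma neg_exp_neg_one_le_mul_log {t : ℝ} (ht : 0 ≤ t) : -exp (-1) ≤ t * log t := by
  rcases ht.eq_or_lt with rfl | ht
  · simp [(exp_pos _).le]
  · have := mul_exp_neg_le_exp_neg_one (-log t)
    rw [neg_neg, exp_log ht] at this
    linarith

lemma mul_log_sub_mul_log_le_sub {m a : ℝ} (hm : 0 ≤ m) (hma : m ≤ a) (ha : a ≤ 1) :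
    a * log a - m * log m ≤ a - m := by
  rcases hm.eq_or_lt with rfl | hm
  · linarith [mul_nonpos_of_nonneg_of_nonpos hma (log_nonpos hma ha)]
  have ha0 : 0 < a := hm.trans_le hma
  have hlog : log a - log m ≤ a / m - 1 := by
    simpa [log_div ha0.ne' hm.ne'] using log_le_sub_one_of_pos (div_pos ha0 hm)
  have hm_div : m * (a / m - 1) = a - m := by field_simp
  nlinarith [mul_nonneg (sub_nonneg.2 hma) (neg_nonneg.2 (log_nonpos ha0.le ha)),
    mul_le_mul_of_nonneg_left hlog hm.le]

lemma half_mul_log_two_div_le_neg_mul_log {m : ℝ} (hm : 0 < m) (hm2 : m ≤ 1 / 2) :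
    m / 2 * log (2 / m) ≤ -(m * log m) := by
  have h2m : log 2 + log m ≤ 0 := by
    rw [← log_mul two_ne_zero hm.ne']
    exact log_nonpos (by positivity) (by linarith)
  rw [log_div two_ne_zero hm.ne']
  nlinarith [mul_nonneg hm.le (neg_nonneg.2 h2m)]

end Real

lemma setDist'_le_dist {X : Type*} [PseudoMetricSpace X] {A B : Set X} {x y : X}
    (hx : x ∈ A) (hy : y ∈ B) : setDist' A B ≤ dist x y :=
  csInf_le ⟨0, by rintro r ⟨a, -, b, -, rfl⟩; exact dist_nonneg⟩ ⟨x, hx, y, hy, rfl⟩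

lemma neg_exp_neg_one_mul_measureReal_le_integral_mul_log {α : Type*} [MeasurableSpace α]
    {μ : Measure α} [IsFiniteMeasure μ] {S : Set α} (hS : MeasurableSet S) {g : α → ℝ}
    (hg : 0 ≤ g) (hgS : ∀ x ∉ S, g x * Real.log (g x) = 0) :
    -Real.exp (-1) * μ.real S ≤ ∫ x, g x * Real.log (g x) ∂μ := by
  by_cases hint : Integrable (fun x => g x * Real.log (g x)) μ
  · have hle : S.indicator (fun _ => -Real.exp (-1)) ≤ fun x => g x * Real.log (g x) := by
      intro x
      by_cases hx : x ∈ S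
      · simpa [indicator_of_mem hx] using Real.neg_exp_neg_one_le_mul_log (hg x)
      · simp [indicator_of_notMem hx, hgS x hx]
    have := integral_mono ((integrable_const _).indicator hS) hint hle
    rwa [integral_indicator_const _ hS, smul_eq_mul, mul_comm] at this
  · rw [integral_undef hint]
    exact mul_nonpos_of_nonpos_of_nonneg (neg_nonpos.2 (Real.exp_pos _).le) measureReal_nonneg

lemma integral_norm_fderiv_rpow_le {E F : Type*} [NormedAddCommGroup E] [NormedSpace ℝ E]
    [NormedAddCommGroup F] [NormedSpace ℝ F] [MeasurableSpace E] {μ : Measure E}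
    [IsFiniteMeasure μ] {S : Set E} (hS : MeasurableSet S) {f : E → F} {L : ℝ≥0}
    (hf : LipschitzWith L f) {q : ℝ} (hq : 0 < q) (hfS : ∀ x ∉ S, fderiv ℝ f x = 0) :
    ∫ x, ‖fderiv ℝ f x‖ ^ q ∂μ ≤ L ^ q * μ.real S := by
  have hle : (fun x => ‖fderiv ℝ f x‖ ^ q) ≤ S.indicator fun _ => (L : ℝ) ^ q := by
    intro x
    by_cases hx : x ∈ S
    · rw [indicator_of_mem hx]
      exact Real.rpow_le_rpow (norm_nonneg _) (norm_fderiv_le_of_lipschitz ℝ hf) hq.le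
    · simp [indicator_of_notMem hx, hfS x hx, Real.zero_rpow hq.ne']
  have := integral_mono_of_nonneg (Filter.Eventually.of_forall fun x => by positivity)
    ((integrable_const (μ := μ) _).indicator hS) (Filter.Eventually.of_forall hle)
  rwa [integral_indicator_const _ hS, smul_eq_mul, mul_comm] at this

lemma neg_mul_log_measureReal_le_of_logSobolev {d : ℕ} {π : Measure (Euc d)}
    [IsProbabilityMeasure π] {q C : ℝ} (hq : 0 < q) (hC : 0 ≤ C) (hLSI : LogSobolevIneq π q C)
    {A B S : Set (Euc d)} (hA : MeasurableSet A) (hS : MeasurableSet S)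
    (hcover : A ∪ B ∪ S = univ) {f : Euc d → ℝ} {L : ℝ≥0} (hf : LipschitzWith L f)
    (hf0 : 0 ≤ f) (hf1 : f ≤ 1) (hfA : EqOn f 1 A) (hfB : EqOn f 0 B) :
    -(π.real A * Real.log (π.real A)) ≤ (C⁻¹ * L ^ q + 1 + Real.exp (-1)) * π.real S := by
  have hAB : ∀ x ∉ S, x ∈ A ∨ x ∈ B := fun x hx => by
    simpa [hx] using hcover.ge (mem_univ x)
  have hfderiv : ∀ x ∉ S, fderiv ℝ f x = 0 := fun x hx => (hAB x hx).elim
    (fun hA => IsLocalMax.fderiv_eq_zero <| .of_forall fun y => (hf1 y).trans_eq (hfA hA).symm)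
    (fun hB => IsLocalMin.fderiv_eq_zero <| .of_forall fun y => (hfB hB).trans_le (hf0 y))
  set g : Euc d → ℝ := fun x => f x ^ q
  have hg0 : 0 ≤ g := fun x => Real.rpow_nonneg (hf0 x) q
  have hg1 : g ≤ 1 := fun x => Real.rpow_le_one (hf0 x) (hf1 x) hq.le
  have hgA : EqOn g 1 A := fun x hx => by simp [g, hfA hx]
  have hgB : EqOn g 0 B := fun x hx => by simp [g, hfB hx, Real.zero_rpow hq.ne']
  have hg_int : Integrable g π :=
    .of_bound (hf.continuous.rpow_const fun _ => Or.inr hq.le).aestronglyMeasurable 1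
      (.of_forall fun x => by simpa [abs_of_nonneg (hg0 x)] using hg1 x)
  set a := ∫ x, g x ∂π
  have hA_le_a : π.real A ≤ a := by
    rw [← integral_indicator_one hA]
    refine integral_mono ((integrable_const 1).indicator hA) hg_int fun x => ?_
    by_cases hx : x ∈ A
    · simp [indicator_of_mem hx, hgA hx]
    · simpa [indicator_of_notMem hx] using hg0 x
  have ha_le : a ≤ π.real A + π.real S := by
    refine le_trans ?_ (measureReal_union_le A S)
    rw [← integral_indicator_one (hA.union hS)]
    refine integral_mono hg_int ((integrable_const 1).indicator (hA.union hS)) fun x => ?_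
    by_cases hx : x ∈ A ∪ S
    · simpa [indicator_of_mem hx] using hg1 x
    · have hxB : x ∈ B := (hAB x fun h => hx (.inr h)).resolve_left fun h => hx (.inl h)
      simp [indicator_of_notMem hx, hgB hxB]
  have ha_le_one : a ≤ 1 := by
    simpa using integral_mono hg_int (integrable_const 1) hg1
  have hent : -Real.exp (-1) * π.real S ≤ ∫ x, g x * Real.log (g x) ∂π :=
    neg_exp_neg_one_mul_measureReal_le_integral_mul_log hS hg0 fun x hx => by
      rcases hAB x hx with hxA | hxB
      · simp [hgA hxA]
      · simp [hgB hxB]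
  have hgrad : ∫ x, ‖fderiv ℝ f x‖ ^ q ∂π ≤ L ^ q * π.real S :=
    integral_norm_fderiv_rpow_le hS hf hq hfderiv
  have hlsi : ∫ x, g x * Real.log (g x) ∂π - a * Real.log a
      ≤ C⁻¹ * ∫ x, ‖fderiv ℝ f x‖ ^ q ∂π := by
    simpa only [g, a, abs_of_nonneg (hf0 _)] using hLSI f hf.locallyLipschitz
  have hshift := Real.mul_log_sub_mul_log_le_sub measureReal_nonneg hA_le_a ha_le_one
  have := mul_le_mul_of_nonneg_left hgrad (inv_nonneg.2 hC)
  linarith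

lemma neg_mul_log_measureReal_mul_rpow_le_of_logSobolev {d : ℕ} {π : Measure (Euc d)}
    [IsProbabilityMeasure π] {q C : ℝ} (hq : 0 < q) (hC : 0 ≤ C) (hLSI : LogSobolevIneq π q C)
    {A B S : Set (Euc d)} (hA : MeasurableSet A) (hS : MeasurableSet S)
    (hcover : A ∪ B ∪ S = univ) {D : ℝ} (hD : 0 < D) (hsep : ∀ x ∈ A, ∀ y ∈ B, D ≤ dist x y) :
    -(π.real A * Real.log (π.real A)) * D ^ q
      ≤ (C⁻¹ + (1 + Real.exp (-1)) * D ^ q) * π.real S := by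
  set f : Euc d → ℝ := fun x => thickenedIndicator hD A x
  have hf : LipschitzWith D.toNNReal⁻¹ f := lipschitzWith_thickenedIndicator hD A
  have hfB : EqOn f 0 B := fun y hy => by
    have hy : y ∉ Metric.thickening D A := fun hy' => by
      obtain ⟨x, hx, hxy⟩ := Metric.mem_thickening_iff.1 hy'
      exact (hsep x hx y hy).not_gt (dist_comm x y ▸ hxy)
    simp only [f, thickenedIndicator_zero hD A hy, NNReal.coe_zero, Pi.zero_apply]
  have key := neg_mul_log_measureReal_le_of_logSobolev hq hC hLSI hA hS hcover hf
    (fun x => (thickenedIndicator hD A x).2) (fun x => thickenedIndicator_le_one hD A x)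
    (fun x hx => by simp only [f, thickenedIndicator_one hD A hx, NNReal.coe_one, Pi.one_apply])
    hfB
  have hDq : 0 < D ^ q := Real.rpow_pos_of_pos hD q
  rw [NNReal.coe_inv, Real.coe_toNNReal _ hD.le, Real.inv_rpow hD.le] at key
  calc -(π.real A * Real.log (π.real A)) * D ^ q
      ≤ (C⁻¹ * (D ^ q)⁻¹ + 1 + Real.exp (-1)) * π.real S * D ^ q := by gcongr
    _ = (C⁻¹ + (1 + Real.exp (-1)) * D ^ q) * π.real S := by field_simp; ring

theorem threeSet_iso_of_logSobolev_general {d : ℕ} (π : Measure (Euc d)) [IsProbabilityMeasure π]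
    (q C : ℝ) (hq : 1 ≤ q) (hC : 0 < C) (hLSI : LogSobolevIneq π q C)
    (S₁ S₂ S₃ : Set (Euc d))
    (h₁ : MeasurableSet S₁) (h₂ : MeasurableSet S₂) (h₃ : MeasurableSet S₃)
    (h₁₂ : Disjoint S₁ S₂)
    (hcover : S₁ ∪ S₂ ∪ S₃ = Set.univ)
    (hD : 0 < setDist' S₁ S₂) :
    setDist' S₁ S₂ ^ q / (C⁻¹ + (1 + Real.exp (-1)) * setDist' S₁ S₂ ^ q)
        * (min (π S₁).toReal (π S₂).toReal / 2)
        * Real.log (2 / min (π S₁).toReal (π S₂).toReal)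
      ≤ (π S₃).toReal := by
  simp only [← measureReal_def]
  set D := setDist' S₁ S₂
  set m := min (π.real S₁) (π.real S₂) with hm_def
  have hm0 : 0 ≤ m := le_min measureReal_nonneg measureReal_nonneg
  rcases hm0.eq_or_lt with hm | hm
  · simp [← hm]
  have hm_half : m ≤ 1 / 2 := by
    have : π.real (S₁ ∪ S₂) ≤ 1 := measureReal_le_one
    rw [measureReal_union (μ := π) h₁₂ h₂] at this
    linarith [min_le_left (π.real S₁) (π.real S₂), min_le_right (π.real S₁) (π.real S₂)]
  have hsep : ∀ x ∈ S₁, ∀ y ∈ S₂, D ≤ dist x y := fun x hx y hy => setDist'_le_dist hx hy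
  have key : -(m * Real.log m) * D ^ q ≤ (C⁻¹ + (1 + Real.exp (-1)) * D ^ q) * π.real S₃ := by
    rcases min_choice (π.real S₁) (π.real S₂) with h | h <;> rw [hm_def, h]
    · exact neg_mul_log_measureReal_mul_rpow_le_of_logSobolev (by linarith) hC.le hLSI h₁ h₃
        hcover hD hsep
    · exact neg_mul_log_measureReal_mul_rpow_le_of_logSobolev (by linarith) hC.le hLSI h₂ h₃
        (by rwa [union_comm S₂]) hD fun y hy x hx => dist_comm x y ▸ hsep x hx y hy
  have hK : 0 < C⁻¹ + (1 + Real.exp (-1)) * D ^ q := by positivity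
  calc D ^ q / (C⁻¹ + (1 + Real.exp (-1)) * D ^ q) * (m / 2) * Real.log (2 / m)
      = m / 2 * Real.log (2 / m) * D ^ q / (C⁻¹ + (1 + Real.exp (-1)) * D ^ q) := by ring
    _ ≤ -(m * Real.log m) * D ^ q / (C⁻¹ + (1 + Real.exp (-1)) * D ^ q) := by
        gcongr
        exact Real.half_mul_log_two_div_le_neg_mul_log hm hm_half
    _ ≤ π.real S₃ := (div_le_iff₀' hK).2 key

/-- **Three-set isoperimetric inequality from a log-Sobolev inequality.** If `π` satisfies the
`L^q`-log-Sobolev inequality with constant `C_LS(q) > 0`, then for every measurable partition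
`ℝ^d = S₁ ⊔ S₂ ⊔ S₃` with `D(S₁,S₂) > 0`,
`π(S₃) ≥ D(S₁,S₂)^q / (C_LS(q)⁻¹ + (1+e⁻¹)·D(S₁,S₂)^q) · (m/2)·log(2/m)` where
`m = min {π(S₁), π(S₂)}`. -/
theorem threeSet_iso_of_logSobolev {d : ℕ} (π : Measure (Euc d)) [IsProbabilityMeasure π]
    (q C : ℝ) (hq : 1 ≤ q) (hC : 0 < C) (hLSI : LogSobolevIneq π q C)
    (S₁ S₂ S₃ : Set (Euc d))
    (h₁ : MeasurableSet S₁) (h₂ : MeasurableSet S₂) (h₃ : MeasurableSet S₃)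
    (h₁₂ : Disjoint S₁ S₂) (h₁₃ : Disjoint S₁ S₃) (h₂₃ : Disjoint S₂ S₃)
    (hcover : S₁ ∪ S₂ ∪ S₃ = Set.univ)
    (hD : 0 < setDist' S₁ S₂) :
    setDist' S₁ S₂ ^ q / (C⁻¹ + (1 + Real.exp (-1)) * setDist' S₁ S₂ ^ q)
        * (min (π S₁).toReal (π S₂).toReal / 2)
        * Real.log (2 / min (π S₁).toReal (π S₂).toReal)
      ≤ (π S₃).toReal :=
  threeSet_iso_of_logSobolev_general π q C hq hC hLSI S₁ S₂ S₃ h₁ h₂ h₃ h₁₂ hcover hD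

end
end

section
/- Let π(dθ, ds) ∝ e^{−U(θ,s)} dθ ds be a probability measure on ℝ^{d₁} × ℝ^{d₂} whose potential U is L-Lipschitz continuous. Define V(s) = −log(∫_{ℝ^{d₁}} e^{−U(θ,s)} dθ), so that the marginal distribution of π on ℝ^{d₂} is π(ds) ∝ e^{−V(s)} ds. Then V is L-Lipschitz continuous; that is, every marginal distribution of an L-log-Lipschitz distribution is L-log-Lipschitz. -/
open MeasureTheory ProbabilityTheory Set
open scoped ENNReal NNReal

noncomputable section

/-- Concatenate `θ ∈ ℝ^{d₁}` and `s ∈ ℝ^{d₂}` into a point of `ℝ^{d₁} × ℝ^{d₂}`,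
viewed as the Euclidean space indexed by `Fin d₁ ⊕ Fin d₂`. -/
def glue {d₁ d₂ : ℕ} (θ : EuclideanSpace ℝ (Fin d₁)) (s : EuclideanSpace ℝ (Fin d₂)) :
    EuclideanSpace ℝ (Fin d₁ ⊕ Fin d₂) :=
  WithLp.toLp 2 (Sum.elim θ s)

/-!
Since `|U(θ, s) − U(θ, t)| ≤ L‖s − t‖` for every `θ`, the integrands satisfy
`e^{−U(θ, s)} ≤ e^{L‖s − t‖} e^{−U(θ, t)}`; integrating in `θ` and taking logarithms
gives `V(t) − V(s) ≤ L‖s − t‖`. The same domination transports integrability of the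
slice `θ ↦ e^{−U(θ, s₀)}`, which Fubini provides for some `s₀`, to every slice, so that
all the integrals are positive and the logarithms are meaningful.
-/

lemma Real.exp_neg_le_exp_mul_exp_neg {x y c : ℝ} (h : |x - y| ≤ c) :
    Real.exp (-x) ≤ Real.exp c * Real.exp (-y) := by
  rw [← Real.exp_add, Real.exp_le_exp]
  linarith [(abs_le.1 h).1]

section LogIntegralExp

variable {α E : Type*} [MeasurableSpace α] [PseudoMetricSpace E] {μ : Measure α}
  {F : α → E → ℝ} {L : ℝ}

lemma integrable_exp_neg_of_abs_sub_le (hF : ∀ a s t, |F a s - F a t| ≤ L * dist s t) {s t : E}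
    (hs : AEStronglyMeasurable (fun a => Real.exp (-F a s)) μ)
    (ht : Integrable (fun a => Real.exp (-F a t)) μ) :
    Integrable (fun a => Real.exp (-F a s)) μ :=
  (ht.const_mul (Real.exp (L * dist s t))).mono' hs <| .of_forall fun a => by
    rw [Real.norm_of_nonneg (Real.exp_pos _).le]
    exact Real.exp_neg_le_exp_mul_exp_neg (hF a s t)

lemma integral_exp_neg_le_exp_mul (hF : ∀ a s t, |F a s - F a t| ≤ L * dist s t) {s t : E}
    (hs : Integrable (fun a => Real.exp (-F a s)) μ)
    (ht : Integrable (fun a => Real.exp (-F a t)) μ) :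
    ∫ a, Real.exp (-F a s) ∂μ ≤
      Real.exp (L * dist s t) * ∫ a, Real.exp (-F a t) ∂μ := by
  rw [← integral_const_mul]
  exact integral_mono hs (ht.const_mul _) fun a => Real.exp_neg_le_exp_mul_exp_neg (hF a s t)

lemma abs_log_integral_exp_neg_sub_le [NeZero μ] (hF : ∀ a s t, |F a s - F a t| ≤ L * dist s t)
    (hint : ∀ s, Integrable (fun a => Real.exp (-F a s)) μ) (s t : E) :
    |Real.log (∫ a, Real.exp (-F a s) ∂μ) - Real.log (∫ a, Real.exp (-F a t) ∂μ)| ≤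
      L * dist s t := by
  have log_le : ∀ s t, Real.log (∫ a, Real.exp (-F a s) ∂μ) ≤
      L * dist s t + Real.log (∫ a, Real.exp (-F a t) ∂μ) := fun s t => by
    have hpos : 0 < ∫ a, Real.exp (-F a t) ∂μ := integral_exp_pos (hint t)
    calc Real.log (∫ a, Real.exp (-F a s) ∂μ)
        ≤ Real.log (Real.exp (L * dist s t) * ∫ a, Real.exp (-F a t) ∂μ) :=
          Real.log_le_log (integral_exp_pos (hint s))
            (integral_exp_neg_le_exp_mul hF (hint s) (hint t))
      _ = L * dist s t + Real.log (∫ a, Real.exp (-F a t) ∂μ) := by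
          rw [Real.log_mul (Real.exp_ne_zero _) hpos.ne', Real.log_exp]
  rw [abs_le]
  constructor
  · linarith [dist_comm s t ▸ log_le t s]
  · linarith [log_le s t]

end LogIntegralExp

section Glue

variable {d₁ d₂ : ℕ}

lemma glue_sub_glue (θ θ' : Euc d₁) (s s' : Euc d₂) :
    glue θ s - glue θ' s' = glue (θ - θ') (s - s') := by
  ext (i | i) <;> rfl

lemma norm_glue_sq (θ : Euc d₁) (s : Euc d₂) : ‖glue θ s‖ ^ 2 = ‖θ‖ ^ 2 + ‖s‖ ^ 2 := by
  simp only [EuclideanSpace.norm_sq_eq, Fintype.sum_sum_type, glue]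
  rfl

lemma dist_glue_glue_right (θ : Euc d₁) (s t : Euc d₂) :
    dist (glue θ s) (glue θ t) = dist s t := by
  rw [dist_eq_norm, dist_eq_norm, glue_sub_glue, sub_self,
    ← sq_eq_sq₀ (norm_nonneg _) (norm_nonneg _), norm_glue_sq, norm_zero]
  ring

lemma continuous_glue_left (s : Euc d₂) :
    Continuous fun θ : Euc d₁ => glue θ s :=
  (PiLp.continuous_toLp 2 _).comp <| continuous_pi fun i => by
    cases i <;> simp only [Sum.elim_inl, Sum.elim_inr] <;> fun_prop

lemma measurePreserving_glue :
    MeasurePreserving (fun p : Euc d₁ × Euc d₂ => glue p.1 p.2) (volume.prod volume) volume :=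
  ((EuclideanSpace.volume_preserving_symm_measurableEquiv_toLp (Fin d₁ ⊕ Fin d₂)).symm.comp
    (volume_measurePreserving_sumPiEquivProdPi_symm fun _ => ℝ)).comp
    ((EuclideanSpace.volume_preserving_symm_measurableEquiv_toLp (Fin d₁)).prod
      (EuclideanSpace.volume_preserving_symm_measurableEquiv_toLp (Fin d₂)))

lemma MeasureTheory.Integrable.ae_integrable_comp_glue {G : Type*} [NormedAddCommGroup G]
    {g : EuclideanSpace ℝ (Fin d₁ ⊕ Fin d₂) → G} (hg : Integrable g) :
    ∀ᵐ s : Euc d₂, Integrable fun θ : Euc d₁ => g (glue θ s) :=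
  ((measurePreserving_glue.integrable_comp hg.aestronglyMeasurable).2 hg).prod_left_ae

end Glue

theorem marginal_log_lipschitz_general (d₁ d₂ : ℕ) (L : ℝ)
    (U : EuclideanSpace ℝ (Fin d₁ ⊕ Fin d₂) → ℝ)
    (hLip : ∀ x y : EuclideanSpace ℝ (Fin d₁ ⊕ Fin d₂), |U x - U y| ≤ L * ‖x - y‖)
    (hInt : Integrable fun x : EuclideanSpace ℝ (Fin d₁ ⊕ Fin d₂) => Real.exp (-U x))
    (V : EuclideanSpace ℝ (Fin d₂) → ℝ)
    (hV : ∀ s, V s = -Real.log (∫ θ : EuclideanSpace ℝ (Fin d₁),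
      Real.exp (-U (glue θ s)))) :
    ∀ s t : EuclideanSpace ℝ (Fin d₂), |V s - V t| ≤ L * ‖s - t‖ := by
  have hU : Continuous U := (LipschitzWith.of_dist_le' fun x y => by
    rw [Real.dist_eq, dist_eq_norm]; exact hLip x y).continuous
  have hF : ∀ θ s t, |U (glue θ s) - U (glue θ t)| ≤ L * dist s t := fun θ s t => by
    simpa only [← dist_eq_norm, dist_glue_glue_right] using hLip (glue θ s) (glue θ t)
  obtain ⟨s₀, hs₀⟩ := hInt.ae_integrable_comp_glue.exists
  have hint : ∀ s, Integrable fun θ : Euc d₁ => Real.exp (-U (glue θ s)) := fun s =>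
    integrable_exp_neg_of_abs_sub_le hF
      (Real.continuous_exp.comp (hU.comp (continuous_glue_left s)).neg).aestronglyMeasurable hs₀
  intro s t
  rw [hV, hV, neg_sub_neg, abs_sub_comm, ← dist_eq_norm]
  exact abs_log_integral_exp_neg_sub_le hF hint s t

/-- **Marginals of log-Lipschitz distributions are log-Lipschitz.** If the potential `U` on
`ℝ^{d₁} × ℝ^{d₂}` is `L`-Lipschitz and `e^{−U}` is integrable, then the marginal potential
`V(s) = −log ∫ e^{−U(θ,s)} dθ` is `L`-Lipschitz. -/
theorem marginal_log_lipschitz (d₁ d₂ : ℕ) (L : ℝ) (hL : 0 < L)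
    (U : EuclideanSpace ℝ (Fin d₁ ⊕ Fin d₂) → ℝ)
    (hLip : ∀ x y : EuclideanSpace ℝ (Fin d₁ ⊕ Fin d₂), |U x - U y| ≤ L * ‖x - y‖)
    (hInt : Integrable fun x : EuclideanSpace ℝ (Fin d₁ ⊕ Fin d₂) => Real.exp (-U x))
    (V : EuclideanSpace ℝ (Fin d₂) → ℝ)
    (hV : ∀ s, V s = -Real.log (∫ θ : EuclideanSpace ℝ (Fin d₁),
      Real.exp (-U (glue θ s)))) :
    ∀ s t : EuclideanSpace ℝ (Fin d₂), |V s - V t| ≤ L * ‖s - t‖ :=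
  marginal_log_lipschitz_general d₁ d₂ L U hLip hInt V hV

end
end

section
/- Let π(dx) ∝ e^{−U(x)} dx be a probability measure on ℝ^d whose potential U is L-Lipschitz continuous. Then the conditional distributions of π are (√L, 1/2)-TV continuous: for all k ∈ {1,…,d} and all x, y ∈ ℝ^d, ‖π(·|x_{−k}) − π(·|y_{−k})‖_TV ≤ √(L·|x_{−k} − y_{−k}|). -/
open MeasureTheory ProbabilityTheory Set
open scoped ENNReal NNReal

noncomputable section

/-! Replacing `x` by `y` changes the unnormalized `k`-th conditional density `e^{-U(·)}` only by
a factor in `[e^{-s}, e^{s}]`, `s = L |x₋ₖ - y₋ₖ|`, because the two arguments differ only off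
coordinate `k`. After normalization the two conditionals dominate each other up to `e^{-2s}`,
which bounds their total variation distance by `1 - e^{-2s} ≤ √s`. -/

section

variable {X : Type*} [MeasurableSpace X]

lemma tvDist_le_one_sub_of_smul_le {μ ν : Measure X} [IsZeroOrProbabilityMeasure μ]
    [IsZeroOrProbabilityMeasure ν] {r : ℝ≥0} (hr : r ≤ 1) (hμν : r • μ ≤ ν) (hνμ : r • ν ≤ μ) :
    tvDist μ ν ≤ 1 - r := by
  have : Nonempty {s : Set X // MeasurableSet s} := ⟨⟨∅, .empty⟩⟩
  refine ciSup_le fun s => ?_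
  have hμ1 : μ.real s ≤ 1 := measureReal_le_one
  have hν1 : ν.real s ≤ 1 := measureReal_le_one
  have hμν' : r * μ.real s ≤ ν.real s := by
    simpa [measureReal_def] using ENNReal.toReal_mono (measure_ne_top ν s) (hμν s)
  have hνμ' : r * ν.real s ≤ μ.real s := by
    simpa [measureReal_def] using ENNReal.toReal_mono (measure_ne_top μ s) (hνμ s)
  have hr' : (r : ℝ) ≤ 1 := hr
  rw [← measureReal_def, ← measureReal_def, abs_sub_le_iff]
  constructor <;> nlinarith [measureReal_nonneg (μ := μ) (s := s.1),
    measureReal_nonneg (μ := ν) (s := s.1)]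

lemma smul_inv_smul_le_inv_smul {ρ σ : Measure X} {r : ℝ≥0} (hρσ : r • ρ ≤ σ)
    (hσρ : r • σ ≤ ρ) : (r ^ 2) • ((ρ univ)⁻¹ • ρ) ≤ (σ univ)⁻¹ • σ := by
  have hmass : (r : ℝ≥0∞) * (ρ univ)⁻¹ ≤ (σ univ)⁻¹ := by
    rw [ENNReal.le_inv_iff_mul_le, mul_right_comm, mul_comm]
    calc (ρ univ)⁻¹ * (r * σ univ) ≤ (ρ univ)⁻¹ * ρ univ := by
          gcongr; simpa using hσρ univ
      _ ≤ 1 := ENNReal.inv_mul_le_one _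
  intro s
  have hs : (r : ℝ≥0∞) * ρ s ≤ σ s := by simpa using hρσ s
  calc ((r ^ 2) • ((ρ univ)⁻¹ • ρ)) s = (r * (ρ univ)⁻¹) * (r * ρ s) := by
        simp only [Measure.smul_apply, smul_eq_mul, ENNReal.smul_def, ENNReal.coe_pow]; ring
    _ ≤ (σ univ)⁻¹ * σ s := mul_le_mul' hmass hs

lemma tvDist_inv_smul_le {ρ σ : Measure X} {r : ℝ≥0} (hr : r ≤ 1) (hρσ : r • ρ ≤ σ)
    (hσρ : r • σ ≤ ρ) : tvDist ((ρ univ)⁻¹ • ρ) ((σ univ)⁻¹ • σ) ≤ 1 - r ^ 2 := by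
  exact_mod_cast tvDist_le_one_sub_of_smul_le (pow_le_one₀ r.2 hr)
    (smul_inv_smul_le_inv_smul hρσ hσρ) (smul_inv_smul_le_inv_smul hσρ hρσ)

lemma inv_lintegral_smul_withDensity (μ : Measure X) (f : X → ℝ≥0∞) :
    (∫⁻ a, f a ∂μ)⁻¹ • μ.withDensity f = ((μ.withDensity f) univ)⁻¹ • μ.withDensity f := by
  rw [withDensity_apply _ .univ, Measure.restrict_univ]

lemma toNNReal_exp_neg_smul_withDensity_le {μ : Measure X} {f g : X → ℝ} {s : ℝ}
    (h : ∀ a, |f a - g a| ≤ s) :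
    (Real.exp (-s)).toNNReal • μ.withDensity (fun a => ENNReal.ofReal (Real.exp (f a)))
      ≤ μ.withDensity (fun a => ENNReal.ofReal (Real.exp (g a))) := by
  refine Measure.le_iff.2 fun S hS => ?_
  rw [Measure.smul_apply, ENNReal.smul_def, smul_eq_mul, withDensity_apply _ hS,
    withDensity_apply _ hS, ← lintegral_const_mul' _ _ ENNReal.coe_ne_top]
  refine lintegral_mono fun a => ?_
  rw [ENNReal.ofNNReal_toNNReal, ← ENNReal.ofReal_mul (Real.exp_pos _).le, ← Real.exp_add]
  gcongr
  linarith [(abs_le.1 (h a)).2]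

lemma tvDist_inv_lintegral_smul_withDensity_exp_le {μ : Measure X} {f g : X → ℝ} {s : ℝ}
    (hs : 0 ≤ s) (h : ∀ a, |f a - g a| ≤ s) :
    tvDist ((∫⁻ a, ENNReal.ofReal (Real.exp (f a)) ∂μ)⁻¹ •
        μ.withDensity fun a => ENNReal.ofReal (Real.exp (f a)))
      ((∫⁻ a, ENNReal.ofReal (Real.exp (g a)) ∂μ)⁻¹ •
        μ.withDensity fun a => ENNReal.ofReal (Real.exp (g a)))
      ≤ 1 - Real.exp (-(2 * s)) := by
  rw [inv_lintegral_smul_withDensity, inv_lintegral_smul_withDensity]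
  convert tvDist_inv_smul_le (Real.toNNReal_le_one.2 (Real.exp_le_one_iff.2 (neg_nonpos.2 hs)))
    (toNNReal_exp_neg_smul_withDensity_le h)
    (toNNReal_exp_neg_smul_withDensity_le fun a => abs_sub_comm (g a) (f a) ▸ h a) using 2
  rw [Real.coe_toNNReal _ (Real.exp_pos _).le, ← Real.exp_nat_mul]
  ring_nf

end

lemma one_sub_exp_neg_two_mul_le_sqrt {s : ℝ} (hs : 0 ≤ s) : 1 - Real.exp (-(2 * s)) ≤ √s := by
  obtain ⟨r, hr, rfl⟩ : ∃ r, 0 ≤ r ∧ s = r ^ 2 := ⟨√s, Real.sqrt_nonneg s, (Real.sq_sqrt hs).symm⟩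
  rw [Real.sqrt_sq hr]
  rcases le_or_gt r (1 / 2) with hr2 | hr2
  · nlinarith [Real.add_one_le_exp (-(2 * r ^ 2))]
  rcases le_or_gt 1 r with hr1 | hr1
  · linarith [Real.exp_pos (-(2 * r ^ 2))]
  -- tangent line of `exp (-(2 * s))` at `s = 1 / 2`, and `exp 1 < 3`
  have htangent : 2 - 2 * r ^ 2 ≤ Real.exp 1 * Real.exp (-(2 * r ^ 2)) := by
    rw [← Real.exp_add]
    linarith [Real.add_one_le_exp (1 + -(2 * r ^ 2))]
  have he : Real.exp 1 * (1 - r) ≤ 2 - 2 * r ^ 2 := by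
    nlinarith [Real.exp_one_lt_three]
  have := le_of_mul_le_mul_left (he.trans htangent) (Real.exp_pos 1)
  linarith

lemma norm_updCoord_sub {d : ℕ} (k : Fin d) (t : ℝ) (x y : Euc d) :
    ‖updCoord k t x - updCoord k t y‖ = distMinus k x y := by
  have hk : ‖(updCoord k t x - updCoord k t y) k‖ ^ 2 = 0 := by simp [updCoord]
  rw [EuclideanSpace.norm_eq, distMinus,
    ← Finset.sum_erase (f := fun j => ‖(updCoord k t x - updCoord k t y) j‖ ^ 2) _ hk]
  refine congrArg Real.sqrt (Finset.sum_congr rfl fun j hj => ?_)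
  simp [updCoord, Finset.ne_of_mem_erase hj, sq_abs]

theorem conditionals_tv_of_log_lipschitz_general {d : ℕ} (L : ℝ) (U : Euc d → ℝ)
    (hLip : ∀ x y : Euc d, |U x - U y| ≤ L * ‖x - y‖) :
    ∀ (k : Fin d) (x y : Euc d),
      tvDist (gibbsCond U k x) (gibbsCond U k y)
        ≤ Real.sqrt (L * distMinus k x y) := by
  intro k x y
  have hU : ∀ t, |-U (updCoord k t x) - -U (updCoord k t y)| ≤ L * distMinus k x y := by
    intro t
    rw [neg_sub_neg, abs_sub_comm, ← norm_updCoord_sub k t]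
    exact hLip _ _
  have hs : 0 ≤ L * distMinus k x y := (abs_nonneg _).trans (hU 0)
  calc tvDist (gibbsCond U k x) (gibbsCond U k y)
        ≤ 1 - Real.exp (-(2 * (L * distMinus k x y))) :=
          tvDist_inv_lintegral_smul_withDensity_exp_le hs hU
    _ ≤ √(L * distMinus k x y) := one_sub_exp_neg_two_mul_le_sqrt hs

/-- **TV continuity of conditionals of log-Lipschitz targets.** If the potential `U` is
`L`-Lipschitz and `e^{−U}` is integrable, then the one-dimensional conditional distributions
of `π ∝ e^{−U}` are `(√L, 1/2)`-TV continuous: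
`‖π(·|x₋ₖ) − π(·|y₋ₖ)‖_TV ≤ √(L·|x₋ₖ − y₋ₖ|)`. -/
theorem conditionals_tv_of_log_lipschitz {d : ℕ} (L : ℝ) (hL : 0 < L) (U : Euc d → ℝ)
    (hLip : ∀ x y : Euc d, |U x - U y| ≤ L * ‖x - y‖)
    (hInt : Integrable fun x : Euc d => Real.exp (-U x)) :
    ∀ (k : Fin d) (x y : Euc d),
      tvDist (gibbsCond U k x) (gibbsCond U k y)
        ≤ Real.sqrt (L * distMinus k x y) :=
  conditionals_tv_of_log_lipschitz_general L U hLip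

end
end
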